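/- Approximation-inclusion for eDCNN versus shallow nets: under the hypotheses of the shallow-net representation theorem, the set of restricted eDCNNs with pooling, H^{s,R,d,0}_{L*} = { a·V(x) : a ∈ ℝ^n, bias parameters free } contains every shallow ReLU network x ↦ a·σ(Wx+θ) with n hidden units; hence dist(f, H^{s,R,d,0}_{L*}) ≤ dist(f, H_n) for every f ∈ C([0,1]^d), where H_n is the set of shallow ReLU nets with n hidden units and dist is sup-norm distance on [0,1]^d. -/

import Mathlib

/-- A sequence `w : ℤ → ℝ` is supported on `{0,…,s}`. -/
def SuppOn (s : ℕ) (w : ℤ → ℝ) : Prop :=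
  ∀ j : ℤ, (j < 0 ∨ (s : ℤ) < j) → w j = 0

/-- Zero-padded (full) convolution of sequences. -/
noncomputable def convSeq (w v : ℤ → ℝ) : ℤ → ℝ :=
  fun j => ∑ᶠ k : ℤ, w (j - k) * v k

/-- The indicator of coordinates `{1,…,m}`. -/
def onesV (m : ℕ) : ℤ → ℝ := fun j => if 1 ≤ j ∧ j ≤ (m : ℤ) then 1 else 0

/-- Restricted eDCNN layers with ReLU. -/
noncomputable def eDCNNRelu (s d : ℕ) (w : ℕ → ℤ → ℝ) (b : ℕ → ℝ) (x : ℤ → ℝ) :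
    ℕ → ℤ → ℝ
  | 0 => x
  | k + 1 => fun j =>
      max (convSeq (w k) (eDCNNRelu s d w b x k) j + onesV (d + (k + 1) * s) j * b k) 0

/-- Embedding of `ℝ^d` into `ℝ^ℤ` at coordinates `1,…,d`. -/
def embed (d : ℕ) (x : Fin d → ℝ) : ℤ → ℝ :=
  fun j => if h : 1 ≤ j ∧ j ≤ (d : ℤ) then x ⟨(j - 1).toNat, by omega⟩ else 0

/-- The unit cube `[0,1]^d`. -/
def cube (d : ℕ) : Set (Fin d → ℝ) := {x | ∀ i, x i ∈ Set.Icc (0 : ℝ) 1}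

/-- Sup-norm distance between two functions on the unit cube. -/
noncomputable def supDist (d : ℕ) (f g : (Fin d → ℝ) → ℝ) : ℝ :=
  sSup ((fun x => |f x - g x|) '' cube d)

/-- `dist(f, H) = inf_{g ∈ H} ‖f - g‖_{C([0,1]^d)}`. -/
noncomputable def distSet (d : ℕ) (f : (Fin d → ℝ) → ℝ)
    (H : Set ((Fin d → ℝ) → ℝ)) : ℝ :=
  sInf ((fun g => supDist d f g) '' H)

/-- Shallow ReLU networks with `n` hidden units. -/
def shallowSet (d n : ℕ) : Set ((Fin d → ℝ) → ℝ) :=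
  {h | ∃ (a : Fin n → ℝ) (W : Matrix (Fin n) (Fin d) ℝ) (θ : Fin n → ℝ),
    h = fun x => ∑ i, a i * max (W.mulVec x i + θ i) 0}

/-- Restricted eDCNNs with `L` layers and location-based pooling
(scale `d`, offset `0`): `a · (S_{d+Ls,d,0} ∘ σ ∘ C_L ∘ σ ∘ C^R_{L-1} ∘ ⋯)(x)`,
with filters supported on `{0,…,s}`, constant biases `b^k` for `k < L` and an
arbitrary final bias vector. -/
noncomputable def eSet (s d n L : ℕ) : Set ((Fin d → ℝ) → ℝ) :=
  {h | ∃ (a : Fin n → ℝ) (ws : ℕ → ℤ → ℝ) (b : ℕ → ℝ) (bL : ℤ → ℝ),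
    (∀ k, SuppOn s (ws k)) ∧
    h = fun x => ∑ i : Fin n, a i *
      max (convSeq (ws (L - 1)) (eDCNNRelu s d ws b (embed d x) (L - 1))
            ((((i : ℕ) + 1) * d : ℕ)) + bL ((((i : ℕ) + 1) * d : ℕ))) 0}

/-!
Write the weight matrix `W` as the polynomial `P` whose coefficients are the reversed rows of `W`
laid end to end; the full convolution of `P` with the embedded input then carries `W i ⬝ᵥ x` at
coordinate `(i + 1) d`. Every real polynomial is a product of irreducibles of degree at most two,
so `P`, of degree at most `n d ≤ L (s - 1)`, is a product of `L` polynomials of degree at most `s`;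
these are the filters. Convolution is multiplication of Laurent polynomials, so the cascade of
filters convolves the input with `P`. If each bias dominates every value the preceding convolution
can take on inputs from the cube, every intermediate ReLU acts as the identity, and the final bias
vector removes the part of the output that does not depend on `x` and adds `θ` at the pooled
coordinates. Functions that agree on the cube have the same sup-distance to `f`, so the infimum
over the eDCNN class is at most the one over shallow nets.
-/

open Polynomial LaurentPolynomial Finset

namespace Polynomial

theorem exists_mul_natDegree_le (s : ℕ) (p : ℝ[X]) :
    ∃ q r : ℝ[X], p = q * r ∧ q.natDegree ≤ s ∧ r.natDegree ≤ p.natDegree - (s - 1) := by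
  induction hN : p.natDegree using Nat.strong_induction_on generalizing p with
  | _ N ih =>
  subst hN
  by_cases hp : p.natDegree ≤ s
  · exact ⟨p, 1, (mul_one p).symm, hp, by simp⟩
  obtain ⟨c, hc, p', rfl⟩ := WfDvdMonoid.exists_irreducible_factor
    (not_isUnit_of_natDegree_pos _ (by omega)) (ne_zero_of_natDegree_gt (not_le.1 hp))
  have hp' : p' ≠ 0 := right_ne_zero_of_mul (ne_zero_of_natDegree_gt (not_le.1 hp))
  have hdeg : (c * p').natDegree = c.natDegree + p'.natDegree := natDegree_mul hc.ne_zero hp'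
  have hc_pos := hc.natDegree_pos
  -- irreducible real polynomials have degree at most two, so `p'` still has degree `≥ s - 1`
  have hc_le := hc.natDegree_le_two
  obtain ⟨q, r, rfl, hq, hr⟩ := ih p'.natDegree (by omega) p' rfl
  refine ⟨q, c * r, by ring, hq, natDegree_mul_le.trans ?_⟩
  omega

theorem exists_prod_range_eq {s : ℕ} (M : ℕ) (p : ℝ[X])
    (hp : p.natDegree ≤ (M + 1) * (s - 1)) :
    ∃ q : ℕ → ℝ[X], (∀ k, (q k).natDegree ≤ s) ∧ ∏ k ∈ range (M + 1), q k = p := by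
  induction M generalizing p with
  | zero => exact ⟨fun _ => p, fun _ => hp.trans (by omega), by simp⟩
  | succ M ih =>
    obtain ⟨q₀, r, rfl, hq₀, hr⟩ := exists_mul_natDegree_le s p
    obtain ⟨q, hq, rfl⟩ := ih r (by rw [add_one_mul] at hp; omega)
    refine ⟨fun k => if k = 0 then q₀ else q (k - 1), fun k => ?_, ?_⟩
    · dsimp only
      split_ifs
      exacts [hq₀, hq _]
    · rw [prod_range_succ', mul_comm]
      simp

theorem coeff_toLaurent_natCast {R : Type*} [Semiring R] (p : R[X]) (n : ℕ) :
    (toLaurent p).coeff n = p.coeff n := by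
  rw [coeff_toLaurent]
  exact Finsupp.mapDomain_apply Nat.castEmbedding.injective _ n

theorem support_coeff_toLaurent_subset_Icc {R : Type*} [Semiring R] {p : R[X]} {s : ℕ}
    (hp : p.natDegree ≤ s) : (toLaurent p).coeff.support ⊆ Icc 0 (s : ℤ) := by
  rw [support_coeff_toLaurent]
  intro j hj
  obtain ⟨m, hm, rfl⟩ := mem_map.1 hj
  have := le_natDegree_of_mem_supp m hm
  simp only [Nat.castEmbedding_apply, mem_Icc]
  omega

end Polynomial

namespace LaurentPolynomial

theorem support_coeff_mul_subset_Icc {R : Type*} [Semiring R] {f g : R[T;T⁻¹]} {a b c e : ℤ}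
    (hf : f.coeff.support ⊆ Icc a b) (hg : g.coeff.support ⊆ Icc c e) :
    (f * g).coeff.support ⊆ Icc (a + c) (b + e) :=
  (AddMonoidAlgebra.support_coeff_mul_subset f g).trans
    ((add_subset_add hf hg).trans (Icc_add_Icc_subset a b c e))

noncomputable def l1Norm (f : ℝ[T;T⁻¹]) : ℝ := ∑ t ∈ f.coeff.support, |f.coeff t|

theorem abs_coeff_mul_le (f : ℝ[T;T⁻¹]) {g : ℝ[T;T⁻¹]} {B : ℝ} (hg : ∀ i, |g.coeff i| ≤ B)
    (j : ℤ) : |(f * g).coeff j| ≤ l1Norm f * B := by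
  rw [AddMonoidAlgebra.coeff_mul_apply_left, Finsupp.sum, l1Norm, sum_mul]
  refine (abs_sum_le_sum_abs _ _).trans (sum_le_sum fun t _ => ?_)
  rw [abs_mul]
  exact mul_le_mul_of_nonneg_left (hg _) (abs_nonneg _)

end LaurentPolynomial

theorem convSeq_coeff_mul (f g : ℝ[T;T⁻¹]) : convSeq f.coeff g.coeff = (f * g).coeff := by
  funext j
  rw [convSeq, AddMonoidAlgebra.coeff_mul_apply_right, Finsupp.sum,
    finsum_eq_sum_of_support_subset (s := g.coeff.support)]
  · simp [sub_eq_add_neg]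
  · exact fun k hk => Finsupp.mem_support_iff.2 (right_ne_zero_of_mul hk)

namespace EDCNN

noncomputable def ones (m : ℕ) : ℝ[T;T⁻¹] := ∑ j ∈ Icc 1 (m : ℤ), T j

theorem coeff_ones (m : ℕ) : ⇑(ones m).coeff = onesV m := by
  funext j
  simp [ones, AddMonoidAlgebra.coeff_sum, Finsupp.finsetSum_apply, T_apply, onesV]

theorem support_ones_subset (m : ℕ) : (ones m).coeff.support ⊆ Icc 1 (m : ℤ) := by
  intro j hj
  rw [Finsupp.mem_support_iff, coeff_ones, onesV] at hj
  simpa using hj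

noncomputable def embedLaurent (d : ℕ) (x : Fin d → ℝ) : ℝ[T;T⁻¹] :=
  ∑ c : Fin d, AddMonoidAlgebra.single ((c : ℤ) + 1) (x c)

theorem coeff_embedLaurent (d : ℕ) (x : Fin d → ℝ) : ⇑(embedLaurent d x).coeff = embed d x := by
  funext j
  simp only [embedLaurent, AddMonoidAlgebra.coeff_sum, Finsupp.finsetSum_apply,
    AddMonoidAlgebra.coeff_single, Finsupp.single_apply, embed]
  split_ifs with hj
  · rw [Fintype.sum_eq_single ⟨(j - 1).toNat, by omega⟩]
    · simp only [if_pos (show (((j - 1).toNat : ℕ) : ℤ) + 1 = j by omega)]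
    · intro c hc
      rw [if_neg]
      intro h
      exact hc (Fin.ext (by simp only; omega))
  · exact sum_eq_zero fun c _ => if_neg (by have := c.isLt; omega)

theorem support_embedLaurent_subset (d : ℕ) (x : Fin d → ℝ) :
    (embedLaurent d x).coeff.support ⊆ Icc 1 (d : ℤ) := by
  intro j hj
  rw [Finsupp.mem_support_iff, coeff_embedLaurent, embed] at hj
  split_ifs at hj with h
  · exact mem_Icc.2 h
  · exact absurd rfl hj

theorem coeff_embedLaurent_mem_Icc {d : ℕ} {x : Fin d → ℝ} (hx : x ∈ cube d) (j : ℤ) :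
    (embedLaurent d x).coeff j ∈ Set.Icc 0 1 := by
  rw [coeff_embedLaurent, embed]
  split_ifs
  exacts [hx _, ⟨le_rfl, zero_le_one⟩]

variable (s d : ℕ)

noncomputable def linearLayer (w : ℕ → ℝ[T;T⁻¹]) (b : ℕ → ℝ) (v : ℝ[T;T⁻¹]) :
    ℕ → ℝ[T;T⁻¹]
  | 0 => v
  | k + 1 => w k * linearLayer w b v k + b k • ones (d + (k + 1) * s)

variable {s d} {w : ℕ → ℝ[T;T⁻¹]} {b : ℕ → ℝ} {v : ℝ[T;T⁻¹]}

theorem coeff_linearLayer_succ (k : ℕ) (j : ℤ) :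
    (linearLayer s d w b v (k + 1)).coeff j =
      (w k * linearLayer s d w b v k).coeff j + onesV (d + (k + 1) * s) j * b k := by
  simp [linearLayer, AddMonoidAlgebra.coeff_add, AddMonoidAlgebra.coeff_smul, ← coeff_ones,
    mul_comm]

theorem linearLayer_eq_prod_mul_add (k : ℕ) :
    linearLayer s d w b v k = (∏ t ∈ range k, w t) * v + linearLayer s d w b 0 k := by
  induction k with
  | zero => simp [linearLayer]
  | succ k ih =>
    simp only [linearLayer, ih, prod_range_succ]
    ring

theorem support_linearLayer_subset (hw : ∀ k, (w k).coeff.support ⊆ Icc 0 (s : ℤ))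
    (hv : v.coeff.support ⊆ Icc 1 (d : ℤ)) (k : ℕ) :
    (linearLayer s d w b v k).coeff.support ⊆ Icc 1 ((d + k * s : ℕ) : ℤ) := by
  induction k with
  | zero => simpa [linearLayer] using hv
  | succ k ih =>
    rw [linearLayer, AddMonoidAlgebra.coeff_add, AddMonoidAlgebra.coeff_smul]
    refine Finsupp.support_add.trans (union_subset ?_ ?_)
    · refine (support_coeff_mul_subset_Icc (hw k) ih).trans (Icc_subset_Icc le_rfl ?_)
      push_cast
      linarith
    · exact Finsupp.support_smul.trans (support_ones_subset _)

noncomputable def layerBound (w : ℕ → ℝ[T;T⁻¹]) (k : ℕ) : ℝ :=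
  ∏ t ∈ range k, 2 * l1Norm (w t)

/-- Large enough that, on inputs with coefficients in `[0, 1]`, the pre-activations of layer
`k + 1` lie in `[0, 2 * bias w k]`, so that the ReLU acts as the identity. -/
noncomputable def bias (w : ℕ → ℝ[T;T⁻¹]) (k : ℕ) : ℝ := l1Norm (w k) * layerBound w k

theorem coeff_linearLayer_mem_Icc (hw : ∀ k, (w k).coeff.support ⊆ Icc 0 (s : ℤ))
    (hv : v.coeff.support ⊆ Icc 1 (d : ℤ)) (hv01 : ∀ j, v.coeff j ∈ Set.Icc 0 1)
    (k : ℕ) (j : ℤ) : (linearLayer s d w (bias w) v k).coeff j ∈ Set.Icc 0 (layerBound w k) := by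
  induction k generalizing j with
  | zero => simpa [linearLayer, layerBound] using hv01 j
  | succ k ih =>
    have hconv : |(w k * linearLayer s d w (bias w) v k).coeff j| ≤ bias w k :=
      abs_coeff_mul_le _ (fun i => abs_le.2 ⟨by linarith [(ih i).1, (ih i).2], (ih i).2⟩) j
    have hB : layerBound w (k + 1) = 2 * bias w k := by
      rw [layerBound, prod_range_succ, bias, layerBound]
      ring
    rw [coeff_linearLayer_succ, hB]
    by_cases hj : j ∈ Icc 1 ((d + (k + 1) * s : ℕ) : ℤ)
    · rw [onesV, if_pos (mem_Icc.1 hj), one_mul]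
      constructor <;> linarith [abs_le.1 hconv]
    · have hzero : (w k * linearLayer s d w (bias w) v k).coeff j = 0 := by
        refine Finsupp.notMem_support_iff.1 fun hm => hj ?_
        refine Icc_subset_Icc le_rfl ?_ (support_coeff_mul_subset_Icc (hw k)
          (support_linearLayer_subset hw hv k) hm)
        push_cast
        linarith
      rw [hzero, onesV, if_neg (fun h => hj (mem_Icc.2 h))]
      constructor <;> linarith [abs_nonneg ((w k * linearLayer s d w (bias w) v k).coeff j)]

theorem eDCNNRelu_eq_linearLayer (hnonneg : ∀ k j, 0 ≤ (linearLayer s d w b v k).coeff j)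
    (k : ℕ) :
    eDCNNRelu s d (fun k => (w k).coeff) b v.coeff k = (linearLayer s d w b v k).coeff := by
  induction k with
  | zero => rfl
  | succ k ih =>
    funext j
    rw [eDCNNRelu, ih, convSeq_coeff_mul]
    dsimp only
    rw [← coeff_linearLayer_succ]
    exact max_eq_left (hnonneg _ j)

theorem convSeq_eDCNNRelu_eq (hw : ∀ k, (w k).coeff.support ⊆ Icc 0 (s : ℤ))
    {x : Fin d → ℝ} (hx : x ∈ cube d) (M : ℕ) :
    convSeq (w M).coeff (eDCNNRelu s d (fun k => (w k).coeff) (bias w) (embed d x) M) =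
      ((∏ t ∈ range (M + 1), w t) * embedLaurent d x +
        w M * linearLayer s d w (bias w) 0 M).coeff := by
  have hnonneg k j := (coeff_linearLayer_mem_Icc hw (support_embedLaurent_subset d x)
    (coeff_embedLaurent_mem_Icc hx) k j).1
  rw [← coeff_embedLaurent, eDCNNRelu_eq_linearLayer hnonneg, convSeq_coeff_mul,
    linearLayer_eq_prod_mul_add, prod_range_succ]
  congr 2
  ring

variable {n : ℕ}

/-- Row `i` of `W`, reversed, fills the coefficients of degrees `i * d, …, i * d + d - 1`; this is
what makes the coefficient at `(i + 1) * d` of the product with `embedLaurent d x` equal to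
`W i ⬝ᵥ x`. -/
noncomputable def rowPoly (W : Matrix (Fin n) (Fin d) ℝ) : ℝ[X] :=
  ∑ p : Fin n × Fin d, monomial (finProdFinEquiv (p.1, p.2.rev) : ℕ) (W p.1 p.2)

theorem natDegree_rowPoly_le (W : Matrix (Fin n) (Fin d) ℝ) : (rowPoly W).natDegree ≤ n * d :=
  natDegree_sum_le_of_forall_le _ _ fun p _ =>
    (natDegree_monomial_le _).trans (finProdFinEquiv (p.1, p.2.rev)).isLt.le

theorem coeff_rowPoly (W : Matrix (Fin n) (Fin d) ℝ) (i : Fin n) (c : Fin d) :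
    (rowPoly W).coeff (finProdFinEquiv (i, c.rev)) = W i c := by
  rw [rowPoly, finsetSum_coeff, Fintype.sum_eq_single (i, c)]
  · exact coeff_monomial_same _ _
  · intro p hp
    refine coeff_monomial_of_ne _ fun h => hp ?_
    have := finProdFinEquiv.injective (Fin.ext h)
    simp only [Prod.mk.injEq, Fin.rev_inj] at this
    exact Prod.ext this.1.symm this.2.symm

theorem coeff_toLaurent_rowPoly_mul_embedLaurent (W : Matrix (Fin n) (Fin d) ℝ)
    (x : Fin d → ℝ) (i : Fin n) :
    (toLaurent (rowPoly W) * embedLaurent d x).coeff ((((i : ℕ) + 1) * d : ℕ) : ℤ) =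
      W.mulVec x i := by
  simp only [embedLaurent, mul_sum, AddMonoidAlgebra.coeff_sum, Finsupp.finsetSum_apply,
    AddMonoidAlgebra.coeff_mul_single_apply, Matrix.mulVec, dotProduct]
  refine sum_congr rfl fun c _ => ?_
  have hc := c.isLt
  have hexp : (((i : ℕ) + 1) * d : ℕ) + -((c : ℤ) + 1) = (finProdFinEquiv (i, c.rev) : ℕ) := by
    simp only [finProdFinEquiv_apply_val, Fin.val_rev]
    push_cast [Nat.sub_add_comm hc, Nat.cast_sub (Nat.succ_le_of_lt hc)]
    ring
  rw [hexp, coeff_toLaurent_natCast, coeff_rowPoly]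

theorem exists_mem_eSet_eqOn (hd : 0 < d) {L : ℕ} (hL : n * d ≤ L * (s - 1))
    (a : Fin n → ℝ) (W : Matrix (Fin n) (Fin d) ℝ) (θ : Fin n → ℝ) :
    ∃ g ∈ eSet s d n L, Set.EqOn g (fun x => ∑ i, a i * max (W.mulVec x i + θ i) 0) (cube d) := by
  obtain ⟨q, hq, hprod⟩ := (rowPoly W).exists_prod_range_eq (L - 1)
    ((natDegree_rowPoly_le W).trans (hL.trans (Nat.mul_le_mul_right _ (by omega))))
  set w : ℕ → ℝ[T;T⁻¹] := fun k => toLaurent (q k)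
  have hw : ∀ k, (w k).coeff.support ⊆ Icc 0 (s : ℤ) :=
    fun k => support_coeff_toLaurent_subset_Icc (hq k)
  have hsuppOn : ∀ k, SuppOn s (w k).coeff := fun k j hj =>
    Finsupp.notMem_support_iff.1 fun hm => by have := mem_Icc.1 (hw k hm); omega
  set pool : Fin n → ℤ := fun i => (((i : ℕ) + 1) * d : ℕ)
  have hpool : Function.Injective pool := fun i i' h =>
    Fin.ext (by simpa using Nat.eq_of_mul_eq_mul_right hd (Int.ofNat_inj.1 h))
  set bL : ℤ → ℝ := Function.extend pool θ 0 -
    ⇑(w (L - 1) * linearLayer s d w (bias w) 0 (L - 1)).coeff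
  refine ⟨_, ⟨a, fun k => (w k).coeff, bias w, bL, hsuppOn, rfl⟩, fun x hx => ?_⟩
  refine sum_congr rfl fun i _ => ?_
  have hP : ∏ t ∈ range (L - 1 + 1), w t = toLaurent (rowPoly W) := by
    rw [← hprod, map_prod]
  rw [convSeq_eDCNNRelu_eq hw hx, hP, AddMonoidAlgebra.coeff_add, Finsupp.add_apply,
    coeff_toLaurent_rowPoly_mul_embedLaurent]
  simp only [bL, Pi.sub_apply]
  rw [show ((((i : ℕ) + 1) * d : ℕ) : ℤ) = pool i from rfl, hpool.extend_apply,
    add_add_sub_cancel]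

end EDCNN

theorem supDist_nonneg (d : ℕ) (f g : (Fin d → ℝ) → ℝ) : 0 ≤ supDist d f g :=
  Real.sSup_nonneg fun _ ⟨_, _, h⟩ => h ▸ abs_nonneg _

theorem supDist_congr_right {d : ℕ} (f : (Fin d → ℝ) → ℝ) {g g' : (Fin d → ℝ) → ℝ}
    (h : Set.EqOn g g' (cube d)) : supDist d f g = supDist d f g' := by
  unfold supDist
  congr 1
  exact Set.image_congr fun x hx => by rw [h hx]

theorem distSet_le_distSet_of_eqOn {d : ℕ} (f : (Fin d → ℝ) → ℝ)
    {H H' : Set ((Fin d → ℝ) → ℝ)} (hH' : H'.Nonempty)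
    (h : ∀ g' ∈ H', ∃ g ∈ H, Set.EqOn g g' (cube d)) : distSet d f H ≤ distSet d f H' := by
  refine csInf_le_csInf ⟨0, ?_⟩ (hH'.image _) ?_
  · rintro _ ⟨g, _, rfl⟩
    exact supDist_nonneg d f g
  · rintro _ ⟨g', hg', rfl⟩
    obtain ⟨g, hg, hgg'⟩ := h g' hg'
    exact ⟨g, hg, supDist_congr_right f hgg'⟩

theorem eDCNN_dist_le_shallow_dist_general (s d n : ℕ) (hs : 2 ≤ s) (hsd : s ≤ d) :
    (∀ h ∈ shallowSet d n, ∃ g ∈ eSet s d n ((n * d + s - 2) / (s - 1)),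
      ∀ x ∈ cube d, g x = h x) ∧
    (∀ f : (Fin d → ℝ) → ℝ,
      distSet d f (eSet s d n ((n * d + s - 2) / (s - 1))) ≤
        distSet d f (shallowSet d n)) := by
  have hL : n * d ≤ (n * d + s - 2) / (s - 1) * (s - 1) := by
    have := Nat.lt_div_mul_add (a := n * d + s - 2) (b := s - 1) (by omega)
    omega
  have hincl : ∀ h ∈ shallowSet d n, ∃ g ∈ eSet s d n ((n * d + s - 2) / (s - 1)),
      Set.EqOn g h (cube d) := by
    rintro _ ⟨a, W, θ, rfl⟩
    exact EDCNN.exists_mem_eSet_eqOn (by omega) hL a W θ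
  exact ⟨hincl, fun f => distSet_le_distSet_of_eqOn f ⟨_, 0, 0, 0, rfl⟩ hincl⟩

/-- eDCNN versus shallow nets: the eDCNN class with `L* = ⌈nd/(s-1)⌉` layers
contains (on `[0,1]^d`) every shallow ReLU net with `n` hidden units, hence
`dist(f, H^{s,R,d,0}_{L*}) ≤ dist(f, H_n)` for every `f`. -/
theorem eDCNN_dist_le_shallow_dist (s d n : ℕ) (hs : 2 ≤ s) (hsd : s ≤ d)
    (hn : 1 ≤ n) :
    (∀ h ∈ shallowSet d n, ∃ g ∈ eSet s d n ((n * d + s - 2) / (s - 1)),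
      ∀ x ∈ cube d, g x = h x) ∧
    (∀ f : (Fin d → ℝ) → ℝ,
      distSet d f (eSet s d n ((n * d + s - 2) / (s - 1))) ≤
        distSet d f (shallowSet d n)) :=
  eDCNN_dist_le_shallow_dist_general s d n hs hsd
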